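/- arXiv:1402.4706 — 10 statements merged into one kernel-verified Lean document; each statement's English description precedes it below -/
import Mathlib

section
/- Let R be a ring in which every left unit lifts modulo every left principal ideal (i.e., for all a, b, c ∈ R, if ab - 1 ∈ Rc then there exists a left invertible u ∈ R with b - u ∈ Rc). Then R is directly finite: for all a, b ∈ R, ab = 1 implies ba = 1. -/
/-!
Given `a * b = 1`, the element `1 - b * a` annihilates `b` from the right, and `b * a - 1` lies in
`R (1 - b * a)`. Lifting therefore yields a left unit `u ≡ a` modulo `R (1 - b * a)` with `u * b = 1`.
A left unit with a right inverse is a unit, so `b` is its two-sided inverse and `a = u`.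
-/

theorem one_sub_mul_mul_eq_zero_of_mul_eq_one {R : Type*} [Ring R] {a b : R} (hab : a * b = 1) :
    (1 - b * a) * b = 0 := by
  rw [sub_mul, one_mul, mul_assoc, hab, mul_one, sub_self]

theorem mul_eq_one_of_sub_eq_mul_one_sub_mul {R : Type*} [Ring R] {a b u r : R} (hab : a * b = 1)
    (hu : a - u = r * (1 - b * a)) : u * b = 1 := by
  rw [← sub_sub_cancel a u, hu, sub_mul, mul_assoc, one_sub_mul_mul_eq_zero_of_mul_eq_one hab,
    mul_zero, sub_zero, hab]

theorem stmt_0 (R : Type*) [Ring R]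
    (h : ∀ a b c : R, (∃ r : R, a * b - 1 = r * c) →
      ∃ u : R, (∃ v : R, v * u = 1) ∧ ∃ r : R, b - u = r * c) :
    ∀ a b : R, a * b = 1 → b * a = 1 := by
  intro a b hab
  obtain ⟨u, ⟨v, hvu⟩, r, hu⟩ := h b a (1 - b * a) ⟨-1, by rw [neg_one_mul, neg_sub]⟩
  have hub : u * b = 1 := mul_eq_one_of_sub_eq_mul_one_sub_mul hab hu
  have hbu : b * u = 1 := left_inv_eq_right_inv hvu hub ▸ hvu
  rwa [left_inv_eq_right_inv hab hbu]
end

section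
/- Let R be a ring in which every right unit lifts modulo every right principal ideal (i.e., for all a, b, c ∈ R, if ab - 1 ∈ cR then there exists a right invertible u ∈ R with a - u ∈ cR). Then R is directly finite. -/
/-!
Let `a * b = 1` and `e = 1 - b * a`. Since `b * a - 1 = e * (-1)`, the element `b` lifts modulo
`eR` to a right unit `u`. As `a * e = 0`, we get `a * u = a * b = 1`; a left inverse of a right
unit is two-sided, so `u * a = 1`, whence `u = b` and `b * a = 1`.
-/

theorem mul_eq_one_comm_of_mul_eq_one_of_mul_right_inverse {M : Type*} [Monoid M] {a b u v : M}
    (hab : a * b = 1) (hau : a * u = 1) (huv : u * v = 1) : b * a = 1 := by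
  have hva : v = a := (left_inv_eq_right_inv hau huv).symm
  have hua : u * a = 1 := hva ▸ huv
  have hub : u = b := left_inv_eq_right_inv hua hab
  exact hub ▸ hua

theorem mul_one_sub_mul_eq_zero {R : Type*} [Ring R] {a b : R} (hab : a * b = 1) :
    a * (1 - b * a) = 0 := by
  rw [mul_sub, mul_one, ← mul_assoc, hab, one_mul, sub_self]

theorem mul_eq_one_comm_of_lift_mod_one_sub_mul {R : Type*} [Ring R] {a b u v r : R}
    (hab : a * b = 1) (huv : u * v = 1) (hbu : b - u = (1 - b * a) * r) : b * a = 1 := by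
  have hau : a * u = 1 := by
    have : a * (b - u) = 0 := by rw [hbu, ← mul_assoc, mul_one_sub_mul_eq_zero hab, zero_mul]
    rwa [mul_sub, hab, sub_eq_zero, eq_comm] at this
  exact mul_eq_one_comm_of_mul_eq_one_of_mul_right_inverse hab hau huv

theorem stmt_1 (R : Type*) [Ring R]
    (h : ∀ a b c : R, (∃ r : R, a * b - 1 = c * r) →
      ∃ u : R, (∃ v : R, u * v = 1) ∧ ∃ r : R, a - u = c * r) :
    ∀ a b : R, a * b = 1 → b * a = 1 := by
  intro a b hab
  obtain ⟨u, ⟨v, huv⟩, r, hbu⟩ := h b a (1 - b * a) ⟨-1, by noncomm_ring⟩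
  exact mul_eq_one_comm_of_lift_mod_one_sub_mul hab huv hbu
end

section
/- (Vasershtein's Lemma) Let R be a ring and a, b, c ∈ R with ab + c = 1. If there exists x ∈ R such that a + cx is invertible, then there exists y ∈ R such that b + yc is invertible. -/
/-!
Write `c = 1 - a * b` and let `w` be the inverse of `u = a + c * x`. Then `b + (1 - b * x) * w * c`
is a unit with inverse `x + (1 - x * b) * a`: in the free ring, each of the two products minus `1`
is a multiple of `w * u - 1`, respectively `u * w - 1`.
-/

section Vaserstein

variable {R : Type*} [Ring R]

theorem vaserstein_identity_left (a b x w : R) :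
    (b + (1 - b * x) * w * (1 - a * b)) * (x + (1 - x * b) * a) - 1 =
      (1 - b * x) * (w * (a + (1 - a * b) * x) - 1) * (1 - b * a) := by
  noncomm_ring

theorem vaserstein_identity_right (a b x w : R) :
    (x + (1 - x * b) * a) * (b + (1 - b * x) * w * (1 - a * b)) - 1 =
      (1 - x * b) * ((a + (1 - a * b) * x) * w - 1) * (1 - a * b) := by
  noncomm_ring

theorem isUnit_add_one_sub_mul_inv_mul {a b x : R} (u : Rˣ) (hu : (u : R) = a + (1 - a * b) * x) :
    IsUnit (b + (1 - b * x) * ↑u⁻¹ * (1 - a * b)) := by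
  refine isUnit_iff_exists.mpr ⟨x + (1 - x * b) * a, ?_, ?_⟩
  · rw [← sub_eq_zero, vaserstein_identity_left, ← hu, u.inv_mul, sub_self, mul_zero, zero_mul]
  · rw [← sub_eq_zero, vaserstein_identity_right, ← hu, u.mul_inv, sub_self, mul_zero, zero_mul]

end Vaserstein

theorem stmt_2 (R : Type*) [Ring R] (a b c : R) (h : a * b + c = 1)
    (hx : ∃ x : R, IsUnit (a + c * x)) : ∃ y : R, IsUnit (b + y * c) := by
  obtain ⟨x, u, hu⟩ := hx
  obtain rfl : c = 1 - a * b := eq_sub_of_add_eq' h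
  exact ⟨(1 - b * x) * ↑u⁻¹, isUnit_add_one_sub_mul_inv_mul u hu⟩
end

section
/- If a ring R has stable range one, then every left unit lifts modulo every left principal ideal: for all a, b, c ∈ R with ab - 1 ∈ Rc, there exists an invertible u ∈ R such that b - u ∈ Rc. -/
/-! Stable range one applied to `b * a + (1 - b * a) = 1` makes `b + (1 - b * a) * y` a unit;
Vaserstein's swap moves the correction term to the other side, giving the unit `b + y * (1 - a * b)`.
When `a * b - 1 = r * c`, this unit is `b - (y * r) * c`, which is congruent to `b` modulo `R c`. -/

theorem isUnit_add_mul_one_sub_mul {R : Type*} [Ring R] {a x y : R}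
    (h : IsUnit (a + (1 - a * x) * y)) : IsUnit (a + y * (1 - x * a)) := by
  obtain ⟨u, hu⟩ := h
  have intertwine_left : (a + y * (1 - x * a)) * (1 - x * y) = (1 - y * x) * u := by
    rw [hu]; noncomm_ring
  have intertwine_right : (1 - a * x) * (a + y * (1 - x * a)) = u * (1 - x * a) := by
    rw [hu]; noncomm_ring
  refine isUnit_iff_exists.mpr ⟨x + (1 - x * y) * ↑u⁻¹ * (1 - a * x), ?_, ?_⟩
  · rw [mul_add, ← mul_assoc, ← mul_assoc, intertwine_left, mul_assoc (1 - y * x),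
      Units.mul_inv, mul_one]
    noncomm_ring
  · rw [add_mul, mul_assoc, mul_assoc, intertwine_right, ← mul_assoc (↑u⁻¹ : R),
      Units.inv_mul, one_mul]
    noncomm_ring

theorem exists_isUnit_add_mul_one_sub_mul {R : Type*} [Ring R]
    (hsr : ∀ a x b : R, a * x + b = 1 → ∃ y : R, IsUnit (a + b * y)) (a b : R) :
    ∃ y : R, IsUnit (b + y * (1 - a * b)) := by
  obtain ⟨y, hy⟩ := hsr b a (1 - b * a) (add_sub_cancel _ _)
  exact ⟨y, isUnit_add_mul_one_sub_mul hy⟩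

theorem stmt_3 (R : Type*) [Ring R]
    (hsr : ∀ a x b : R, a * x + b = 1 → ∃ y : R, IsUnit (a + b * y)) :
    ∀ a b c : R, (∃ r : R, a * b - 1 = r * c) →
      ∃ u : R, IsUnit u ∧ ∃ r : R, b - u = r * c := by
  rintro a b c ⟨r, hr⟩
  obtain ⟨y, hy⟩ := exists_isUnit_add_mul_one_sub_mul hsr a b
  refine ⟨_, hy, y * r, ?_⟩
  rw [← neg_sub (a * b) 1, hr]
  noncomm_ring
end

section
/- If in a ring R every left unit lifts modulo every left principal ideal (for all a, b, c ∈ R, ab - 1 ∈ Rc implies there exists a left invertible u with b - u ∈ Rc), then R has stable range one. -/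
/-!
Lifting the left unit `b` modulo `R(1 - ba)` whenever `ab = 1` produces a left inverse of `b`
that is itself left invertible, so left units are units. Now if `ax + b = 1`, then
`xa - 1 ∈ R(1 - xa)`, so `a` lifts to a unit `a + t(1 - xa)`; since `a(1 - xa) = (1 - ax)a`,
this unit can be transported to `a + (1 - ax)t = a + bt` by an explicit inverse.
-/

def LeftUnitsLiftModPrincipal (R : Type*) [Ring R] : Prop :=
  ∀ a b c : R, (∃ r : R, a * b - 1 = r * c) →
    ∃ u : R, (∃ v : R, v * u = 1) ∧ ∃ r : R, b - u = r * c

theorem LeftUnitsLiftModPrincipal.isDedekindFiniteMonoid {R : Type*} [Ring R]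
    (h : LeftUnitsLiftModPrincipal R) : IsDedekindFiniteMonoid R where
  mul_eq_one_symm {a b} hab := by
    obtain ⟨u, ⟨v, hvu⟩, r, hr⟩ := h b a (1 - b * a) ⟨-1, by noncomm_ring⟩
    have hu : u = a - r * (1 - b * a) := by rw [← hr]; abel
    have hub : u * b = 1 := by
      calc u * b = a * b - r * (b - b * (a * b)) := by rw [hu]; noncomm_ring
        _ = 1 := by rw [hab]; noncomm_ring
    have hvb : v = b := by rw [← one_mul b, ← hvu, mul_assoc, hub, mul_one]
    have hau : a = u := by rw [← one_mul u, ← hab, mul_assoc, ← hvb, hvu, mul_one]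
    rw [hau, ← hvb, hvu]

theorem IsUnit.add_one_sub_mul_mul {R : Type*} [Ring R] {a x t : R}
    (hu : IsUnit (a + t * (1 - x * a))) : IsUnit (a + (1 - a * x) * t) := by
  obtain ⟨w, hright, hleft⟩ := isUnit_iff_exists.mp hu
  refine isUnit_iff_exists.mpr ⟨x + (1 - x * a) * w * (1 - t * x), ?_, ?_⟩
  · calc (a + (1 - a * x) * t) * (x + (1 - x * a) * w * (1 - t * x))
          = (a + (1 - a * x) * t) * x
            + (1 - a * x) * ((a + t * (1 - x * a)) * w) * (1 - t * x) := by noncomm_ring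
      _ = 1 := by rw [hright]; noncomm_ring
  · calc (x + (1 - x * a) * w * (1 - t * x)) * (a + (1 - a * x) * t)
          = x * (a + (1 - a * x) * t)
            + (1 - x * a) * (w * (a + t * (1 - x * a))) * (1 - x * t) := by noncomm_ring
      _ = 1 := by rw [hleft]; noncomm_ring

theorem stmt_4 (R : Type*) [Ring R]
    (h : ∀ a b c : R, (∃ r : R, a * b - 1 = r * c) →
      ∃ u : R, (∃ v : R, v * u = 1) ∧ ∃ r : R, b - u = r * c) :
    ∀ a x b : R, a * x + b = 1 → ∃ y : R, IsUnit (a + b * y) := by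
  have : IsDedekindFiniteMonoid R := LeftUnitsLiftModPrincipal.isDedekindFiniteMonoid h
  intro a x b hab
  obtain ⟨u, ⟨v, hvu⟩, t, ht⟩ := h x a (1 - x * a) ⟨-1, by noncomm_ring⟩
  have hu : a + -t * (1 - x * a) = u := by rw [neg_mul, ← ht]; abel
  have hb : b = 1 - a * x := eq_sub_of_add_eq' hab
  refine ⟨-t, hb ▸ IsUnit.add_one_sub_mul_mul ?_⟩
  exact hu ▸ IsUnit.of_mul_eq_one_right v hvu
end

section
/- A ring R has stable range one if and only if every left unit lifts modulo every left principal ideal, i.e., for all a, b, c ∈ R with ab - 1 ∈ Rc there exists a left invertible u ∈ R with b - u ∈ Rc. -/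
/-!
Both directions rest on Vaserstein's symmetry: `a + (1 - a z) y` is a unit iff
`a + y (1 - z a)` is. If `a b - 1 = r c`, stable range one applied to `b a + (1 - b a) = 1`
gives a unit `b + (1 - b a) y`, hence a unit `u = b + y (1 - a b) = b - y r c`.
Conversely, lifting the left unit `p` of `p q = 1` modulo `R (1 - q p)` produces a left unit
that is also right invertible, which forces `q p = 1`; so `R` is Dedekind-finite, and lifting
`a` modulo `R (1 - x a)` yields a unit `a - s (1 - x a)`, to which the symmetry applies.
-/

open MulOpposite

section

variable {R : Type*} [Ring R]

variable (R) in
def HasStableRangeOne : Prop :=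
  ∀ a x b : R, a * x + b = 1 → ∃ y : R, IsUnit (a + b * y)

variable (R) in
def LeftUnitsLift : Prop :=
  ∀ a b c : R, (∃ r : R, a * b - 1 = r * c) →
    ∃ u : R, (∃ v : R, v * u = 1) ∧ ∃ r : R, b - u = r * c

theorem isUnit_add_mul_one_sub_of_isUnit_add_one_sub_mul {a z y : R}
    (h : IsUnit (a + (1 - a * z) * y)) : IsUnit (a + y * (1 - z * a)) := by
  obtain ⟨w, hw⟩ := h
  refine isUnit_iff_exists.mpr ⟨z + (1 - z * y) * (↑w⁻¹ * (1 - a * z)), ?_, ?_⟩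
  · calc (a + y * (1 - z * a)) * (z + (1 - z * y) * (↑w⁻¹ * (1 - a * z)))
        = (1 - y * z) * ((a + (1 - a * z) * y) * ↑w⁻¹ - 1) * (1 - a * z) + 1 := by noncomm_ring
      _ = 1 := by rw [← hw, Units.mul_inv, sub_self, mul_zero, zero_mul, zero_add]
  · calc (z + (1 - z * y) * (↑w⁻¹ * (1 - a * z))) * (a + y * (1 - z * a))
        = (1 - z * y) * (↑w⁻¹ * (a + (1 - a * z) * y) - 1) * (1 - z * a) + 1 := by noncomm_ring
      _ = 1 := by rw [← hw, Units.inv_mul, sub_self, mul_zero, zero_mul, zero_add]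

theorem isUnit_add_one_sub_mul_mul_iff {a z y : R} :
    IsUnit (a + (1 - a * z) * y) ↔ IsUnit (a + y * (1 - z * a)) := by
  refine ⟨isUnit_add_mul_one_sub_of_isUnit_add_one_sub_mul, fun h => ?_⟩
  -- the converse is the forward direction in `Rᵐᵒᵖ`
  have h' : IsUnit (op a + (1 - op a * op z) * op y) := by
    simpa only [← op_one, ← op_mul, ← op_sub, ← op_add, isUnit_op] using h
  simpa only [← op_one, ← op_mul, ← op_sub, ← op_add, isUnit_op] using
    isUnit_add_mul_one_sub_of_isUnit_add_one_sub_mul h'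

theorem HasStableRangeOne.leftUnitsLift (H : HasStableRangeOne R) : LeftUnitsLift R := by
  rintro a b c ⟨r, hr⟩
  obtain ⟨y, hy⟩ := H b a (1 - b * a) (add_sub_cancel _ _)
  obtain ⟨u, hu⟩ := isUnit_add_one_sub_mul_mul_iff.mp hy
  have hu_eq : (u : R) = b - y * r * c := by rw [hu, mul_assoc, ← hr]; noncomm_ring
  exact ⟨u, ⟨↑u⁻¹, u.inv_mul⟩, y * r, by rw [hu_eq, sub_sub_cancel]⟩

theorem LeftUnitsLift.isDedekindFiniteMonoid (H : LeftUnitsLift R) :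
    IsDedekindFiniteMonoid R where
  mul_eq_one_symm {p q} hpq := by
    obtain ⟨u, ⟨v, hvu⟩, s, hs⟩ := H q p (1 - q * p) ⟨-1, by noncomm_ring⟩
    have hu : u = p - s * (1 - q * p) := by rw [← hs, sub_sub_cancel]
    have huq : u * q = 1 := by
      calc u * q = p * q - s * (q - q * (p * q)) := by rw [hu]; noncomm_ring
        _ = 1 := by rw [hpq, mul_one, sub_self, mul_zero, sub_zero]
    have hqu : q * u = 1 := left_inv_eq_right_inv hvu huq ▸ hvu
    rwa [← left_inv_eq_right_inv hpq hqu] at hqu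

theorem LeftUnitsLift.hasStableRangeOne (H : LeftUnitsLift R) : HasStableRangeOne R := by
  have := H.isDedekindFiniteMonoid
  intro a x b hab
  obtain ⟨u, ⟨v, hvu⟩, s, hs⟩ := H x a (1 - x * a) ⟨-1, by noncomm_ring⟩
  have hu : IsUnit (a + (-s) * (1 - x * a)) := by
    rw [neg_mul, ← hs, ← sub_eq_add_neg, sub_sub_cancel]
    exact .of_mul_eq_one_right v hvu
  refine ⟨-s, ?_⟩
  rwa [← isUnit_add_one_sub_mul_mul_iff, ← eq_sub_of_add_eq' hab] at hu

end

theorem stmt_5 (R : Type*) [Ring R] :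
    (∀ a x b : R, a * x + b = 1 → ∃ y : R, IsUnit (a + b * y)) ↔
    (∀ a b c : R, (∃ r : R, a * b - 1 = r * c) →
      ∃ u : R, (∃ v : R, v * u = 1) ∧ ∃ r : R, b - u = r * c) :=
  ⟨HasStableRangeOne.leftUnitsLift, LeftUnitsLift.hasStableRangeOne⟩
end

section
/- Let R be a ring in which every left principal ideal is the left annihilator of some element (for every y ∈ R there exists a ∈ R with Ry = ann_l(a) = {r ∈ R : ra = 0}). If R is left uniquely generated, then R has stable range one. -/
/-!
Given `a * x + b = 1`, pick `c` with `R (1 - x a) = ann_l c`. Then `c = x a c`, so `R (a c) = R c`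
and unique generation gives a unit `u` with `a c = u c`. Hence `a - u` kills `c`, i.e.
`u = a - e (1 - x a)` for some `e`, and an explicit Jacobson-type identity turns the unit
`a - e (1 - x a)` into the unit `a - (1 - a x) e = a + b (-e)`.
-/

theorem isUnit_sub_one_sub_mul_mul {R : Type*} [Ring R] {a x e : R}
    (h : IsUnit (a - e * (1 - x * a))) : IsUnit (a - (1 - a * x) * e) := by
  obtain ⟨u, hu⟩ := h
  set v := a - (1 - a * x) * e
  have hleft : v * (1 - x * a) = (1 - a * x) * u := by rw [hu]; simp only [v]; noncomm_ring
  have hright : (1 + e * x) * v = u * (1 + x * e) := by rw [hu]; simp only [v]; noncomm_ring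
  refine ⟨⟨v, x + (1 - x * a) * ↑u⁻¹ * (1 + e * x), ?_, ?_⟩, rfl⟩
  · calc v * (x + (1 - x * a) * ↑u⁻¹ * (1 + e * x))
        = v * x + v * (1 - x * a) * ↑u⁻¹ * (1 + e * x) := by noncomm_ring
      _ = v * x + (1 - a * x) * (1 + e * x) := by rw [hleft, Units.mul_inv_cancel_right]
      _ = 1 := by simp only [v]; noncomm_ring
  · calc (x + (1 - x * a) * ↑u⁻¹ * (1 + e * x)) * v
        = x * v + (1 - x * a) * (↑u⁻¹ * ((1 + e * x) * v)) := by noncomm_ring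
      _ = x * v + (1 - x * a) * (1 + x * e) := by rw [hright, Units.inv_mul_cancel_left]
      _ = 1 := by simp only [v]; noncomm_ring

theorem stmt_7 (R : Type*) [Ring R]
    (hann : ∀ y : R, ∃ a : R, ∀ r : R, (∃ s : R, r = s * y) ↔ r * a = 0)
    (hug : ∀ a b : R, (∀ r : R, (∃ s : R, r = s * a) ↔ (∃ s : R, r = s * b)) →
      ∃ u : R, IsUnit u ∧ a = u * b) :
    ∀ a x b : R, a * x + b = 1 → ∃ y : R, IsUnit (a + b * y) := by
  intro a x b hab
  obtain ⟨c, hc⟩ := hann (1 - x * a)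
  have hxac : x * (a * c) = c := by
    have h : (1 - x * a) * c = 0 := (hc _).mp ⟨1, (one_mul _).symm⟩
    rwa [sub_mul, one_mul, sub_eq_zero, mul_assoc, eq_comm] at h
  obtain ⟨u, hu, hac⟩ := hug (a * c) c fun r =>
    ⟨fun ⟨s, hs⟩ => ⟨s * a, by rw [hs, mul_assoc]⟩,
      fun ⟨s, hs⟩ => ⟨s * x, by rw [hs, mul_assoc, hxac]⟩⟩
  obtain ⟨e, he⟩ := (hc (a - u)).mpr (by rw [sub_mul, ← hac, sub_self])
  refine ⟨-e, ?_⟩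
  rw [eq_sub_of_add_eq' hab, mul_neg, ← sub_eq_add_neg]
  exact isUnit_sub_one_sub_mul_mul (by rwa [← he, sub_sub_cancel])
end

section
/- If a ring R has stable range one, then R is right uniquely generated: for all a, b ∈ R, aR = bR implies there exists a unit u ∈ R with a = bu. -/
/-! Write `a = b s` and `b = a t`. Since `s t + (1 - s t) = 1`, stable range one makes
`u = s + (1 - s t) y` a unit for some `y`; as `b (1 - s t) = b - a t = 0`, we get `b u = b s = a`. -/

theorem mul_add_one_sub_mul_mul_eq {R : Type*} [Ring R] {a b s t : R}
    (hs : a = b * s) (ht : b = a * t) (y : R) : b * (s + (1 - s * t) * y) = a := by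
  have hb : b * (s * t) = b := by rw [← mul_assoc, ← hs, ← ht]
  rw [mul_add, ← mul_assoc, mul_sub, mul_one, hb, sub_self, zero_mul, add_zero, hs]

theorem stmt_9 (R : Type*) [Ring R]
    (hsr : ∀ a x b : R, a * x + b = 1 → ∃ y : R, IsUnit (a + b * y)) :
    ∀ a b : R, (∀ r : R, (∃ s : R, r = a * s) ↔ (∃ s : R, r = b * s)) →
      ∃ u : R, IsUnit u ∧ a = b * u := by
  intro a b h
  obtain ⟨s, hs⟩ := (h a).mp ⟨1, (mul_one a).symm⟩
  obtain ⟨t, ht⟩ := (h b).mpr ⟨1, (mul_one b).symm⟩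
  obtain ⟨y, hy⟩ := hsr s t (1 - s * t) (add_sub_cancel _ _)
  exact ⟨_, hy, (mul_add_one_sub_mul_mul_eq hs ht y).symm⟩
end

section
/- Every left uniquely generated ring is directly finite: if R is a ring such that Ra = Rb implies a = ub for some unit u, then ab = 1 implies ba = 1 for all a, b ∈ R. -/
/-! If `a * b = 1`, then `R b = R = R 1`, so unique generation makes `b` a unit; a unit's
left inverse is its two-sided inverse. -/

theorem exists_eq_mul_of_mul_eq_one {M : Type*} [Monoid M] {a b : M} (hab : a * b = 1)
    (r : M) : ∃ s, r = s * b :=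
  ⟨r * a, by rw [mul_assoc, hab, mul_one]⟩

theorem stmt_11 (R : Type*) [Ring R]
    (hug : ∀ a b : R, (∀ r : R, (∃ s : R, r = s * a) ↔ (∃ s : R, r = s * b)) →
      ∃ u : R, IsUnit u ∧ a = u * b) :
    ∀ a b : R, a * b = 1 → b * a = 1 := by
  intro a b hab
  have hRb : ∀ r : R, (∃ s, r = s * b) ↔ (∃ s, r = s * 1) := fun r =>
    ⟨fun _ => ⟨r, (mul_one r).symm⟩, fun _ => exists_eq_mul_of_mul_eq_one hab r⟩
  obtain ⟨u, hu, rfl⟩ := hug b 1 hRb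
  rw [mul_one] at hab ⊢
  exact hu.isRegular.right.mul_eq_one_symm hab
end

section
/- Let R be a ring and x, y ∈ R with Rx + Ry = R. Suppose Ry = ann_l(a) and R(xa) = ann_l(b) for some a, b ∈ R. Then ab = 0 and ann_l(b) = Ra = R(xa). -/
/-! Since `Rx + Ry = R` and `ya = 0`, writing `1 = rx + sy` gives `a = r(xa)`, so `Ra = R(xa)`;
in particular `a ∈ R(xa) = ann_l(b)`, i.e. `ab = 0`. -/

section

variable {R : Type*} [Ring R]

theorem eq_mul_mul_of_add_eq_one_of_mul_eq_zero {r s x y a : R} (hrs : r * x + s * y = 1)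
    (hya : y * a = 0) : a = r * (x * a) :=
  calc a = (r * x + s * y) * a := by rw [hrs, one_mul]
    _ = r * (x * a) := by rw [add_mul, mul_assoc, mul_assoc, hya, mul_zero, add_zero]

theorem exists_eq_mul_iff_of_eq_mul_of_eq_mul {c d p q : R} (hc : c = p * d) (hd : d = q * c)
    (t : R) : (∃ s, t = s * c) ↔ ∃ s, t = s * d :=
  ⟨fun ⟨s, hs⟩ => ⟨s * p, by rw [hs, mul_assoc, ← hc]⟩,
    fun ⟨s, hs⟩ => ⟨s * q, by rw [hs, mul_assoc, ← hd]⟩⟩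

end

theorem stmt_16 (R : Type*) [Ring R] (x y a b : R)
    (hxy : ∃ r s : R, r * x + s * y = 1)
    (h1 : ∀ r : R, (∃ s : R, r = s * y) ↔ r * a = 0)
    (h2 : ∀ r : R, (∃ s : R, r = s * (x * a)) ↔ r * b = 0) :
    a * b = 0 ∧ (∀ r : R, r * b = 0 ↔ (∃ s : R, r = s * a)) ∧
      (∀ r : R, (∃ s : R, r = s * a) ↔ (∃ s : R, r = s * (x * a))) := by
  obtain ⟨r, s, hrs⟩ := hxy
  have hya : y * a = 0 := (h1 y).mp ⟨1, (one_mul y).symm⟩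
  have ha : a = r * (x * a) := eq_mul_mul_of_add_eq_one_of_mul_eq_zero hrs hya
  have hspan := exists_eq_mul_iff_of_eq_mul_of_eq_mul ha rfl
  exact ⟨(h2 a).mp ⟨r, ha⟩, fun t => (h2 t).symm.trans (hspan t).symm, hspan⟩
end
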